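/- Let n ≥ 1 be an integer, let x be a nonempty word over a linearly ordered finite alphabet, and let W be a word containing 2n−1 pairwise disjoint occurrences of subwords of the form x^{pᵢ}·vᵢ (i = 1, …, 2n−1), where each pᵢ > n and each vᵢ is a word of the same length as x with vᵢ ≠ x. Then W is n-divisible. -/

import Mathlib

/-- `u` is lexicographically greater than `v`: at the first position where they
differ, `u` has the larger letter (words where one is a prefix of the other are
incomparable). -/
def WordGt {α : Type*} [LinearOrder α] (u v : List α) : Prop :=
  List.Lex (· < ·) v u ∧ ¬ v <+: u

/-- `wpow z k` is the concatenation of `k` copies of the word `z`. -/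
def wpow {α : Type*} (z : List α) : ℕ → List α
  | 0 => []
  | k + 1 => z ++ wpow z k

/-- A word is noncyclic (primitive) if it is nonempty and is not a proper power. -/
def Noncyclic {α : Type*} (z : List α) : Prop :=
  z ≠ [] ∧ ∀ (v : List α) (k : ℕ), 2 ≤ k → z ≠ wpow v k

/-- `W` is `n`-divisible: `W = W₀W₁⋯Wₙ` with `W₁,…,Wₙ` nonempty and in strictly
decreasing lexicographic order. -/
def NDivisible {α : Type*} [LinearOrder α] (W : List α) (n : ℕ) : Prop :=
  ∃ (W₀ : List α) (f : Fin n → List α),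
    W = W₀ ++ (List.ofFn f).flatten ∧
    (∀ i, f i ≠ []) ∧
    (∀ i j, i < j → WordGt (f i) (f j))

/-- `W` is strongly `n`-divisible over the set of words `Z` (with boundary `2n`):
it is `n`-divisible with each `Wᵢ` (`1 ≤ i ≤ n`) beginning with `zᵢ^{2n}` for
pairwise distinct `z₁,…,zₙ ∈ Z`. -/
def StronglyNDivisible {α : Type*} [LinearOrder α] (W : List α) (n : ℕ)
    (Z : Set (List α)) : Prop :=
  ∃ (W₀ : List α) (f : Fin n → List α) (z : Fin n → List α),
    W = W₀ ++ (List.ofFn f).flatten ∧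
    (∀ i, f i ≠ []) ∧
    (∀ i j, i < j → WordGt (f i) (f j)) ∧
    (∀ i, z i ∈ Z ∧ wpow (z i) (2 * n) <+: f i) ∧
    Function.Injective z

/-- `u` occurs as a subword of `W` starting at position `p`. -/
def OccursAt {α : Type*} (W u : List α) (p : ℕ) : Prop :=
  ∃ pre suf : List α, pre.length = p ∧ W = pre ++ u ++ suf

/-!
Among the `2n - 1` occurrences `x^{pᵢ}vᵢ`, at least `n` have `vᵢ < x` or at least `n` have `vᵢ > x`;
list these `n` occurrences from left to right. If `vᵢ < x`, cut `W` just before the last `n - j`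
copies of `x` in the `j`-th occurrence: the `j`-th piece then starts with `x^{n-j}vⱼ`, and more
copies of `x` followed by anything beat fewer copies followed by `v < x`. If `vᵢ > x`, cut before the
last `j + 1` copies instead: fewer copies followed by `v > x` beat more copies of `x`.
Since `pᵢ > n`, each occurrence has enough copies of `x`.
-/

section

variable {α : Type*}

theorem wpow_length (z : List α) (k : ℕ) : (wpow z k).length = k * z.length := by
  induction k with
  | zero => simp [wpow]
  | succ k ih => simp [wpow, ih, Nat.succ_mul, Nat.add_comm]

theorem wpow_add (z : List α) (a b : ℕ) : wpow z (a + b) = wpow z a ++ wpow z b := by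
  induction a with
  | zero => simp [wpow]
  | succ a ih => simp [Nat.succ_add, wpow, ih]

theorem wpow_succ' (z : List α) (k : ℕ) : wpow z (k + 1) = wpow z k ++ z := by
  rw [wpow_add, wpow, wpow, List.append_nil]

namespace WordGt

variable [LinearOrder α] {u v : List α}

theorem append (h : WordGt u v) (s t : List α) : WordGt (u ++ s) (v ++ t) := by
  obtain ⟨hlex, hpre⟩ := h
  induction hlex with
  | nil => exact absurd (List.nil_prefix) hpre
  | @cons a v u _ ih =>
    rw [List.cons_prefix_cons] at hpre
    exact ⟨.cons (ih fun h => hpre ⟨rfl, h⟩).1, by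
      simpa only [List.cons_append, List.cons_prefix_cons, true_and] using (ih fun h => hpre ⟨rfl, h⟩).2⟩
  | @rel a v b u hab =>
    exact ⟨.rel hab, by
      simp only [List.cons_append, List.cons_prefix_cons, not_and]
      exact fun h => absurd hab (h ▸ lt_irrefl a)⟩

theorem of_isPrefix {U V : List α} (h : WordGt u v) (hu : u <+: U) (hv : v <+: V) : WordGt U V := by
  obtain ⟨s, rfl⟩ := hu
  obtain ⟨t, rfl⟩ := hv
  exact h.append s t

theorem append_left (h : WordGt u v) (s : List α) : WordGt (s ++ u) (s ++ v) :=
  ⟨.append_left _ h.1 s, by rw [List.prefix_append_right_inj]; exact h.2⟩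

end WordGt

section Periodic

variable [LinearOrder α] {x u v : List α} {a b : ℕ}

theorem wordGt_of_lt_of_length_eq (h : v < u) (hl : v.length = u.length) : WordGt u v :=
  ⟨h, fun hpre => lt_irrefl u (hpre.eq_of_length hl ▸ h)⟩

theorem wordGt_wpow_append_of_lt_of_gt (hv : v < x) (hl : v.length = x.length) (hab : b < a) :
    WordGt (wpow x a ++ u) (wpow x b ++ v) := by
  have hx : wpow x b ++ x <+: wpow x a ++ u := by
    rw [← wpow_succ']
    exact ⟨wpow x (a - (b + 1)) ++ u, by rw [← List.append_assoc, ← wpow_add]; congr 2; omega⟩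
  exact ((wordGt_of_lt_of_length_eq hv hl).append_left _).of_isPrefix hx (List.prefix_refl _)

theorem wordGt_wpow_append_of_gt_of_lt (hu : x < u) (hl : x.length = u.length) (hab : a < b) :
    WordGt (wpow x a ++ u) (wpow x b ++ v) := by
  have hx : wpow x a ++ x <+: wpow x b ++ v := by
    rw [← wpow_succ']
    exact ⟨wpow x (b - (a + 1)) ++ v, by rw [← List.append_assoc, ← wpow_add]; congr 2; omega⟩
  exact ((wordGt_of_lt_of_length_eq hu hl).append_left _).of_isPrefix (List.prefix_refl _) hx

end Periodic

theorem OccursAt.isPrefix_drop {W u : List α} {p : ℕ} (h : OccursAt W u p) : u <+: W.drop p := by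
  obtain ⟨pre, suf, rfl, rfl⟩ := h
  simp

theorem OccursAt.of_append_left {W s u : List α} {p : ℕ} (h : OccursAt W (s ++ u) p) :
    OccursAt W u (p + s.length) := by
  obtain ⟨pre, suf, rfl, rfl⟩ := h
  exact ⟨pre ++ s, suf, by simp, by simp⟩

theorem OccursAt.wpow_append_of_le {W x u : List α} {p q a : ℕ}
    (h : OccursAt W (wpow x q ++ u) p) (ha : a ≤ q) :
    OccursAt W (wpow x a ++ u) (p + (q - a) * x.length) := by
  rw [← Nat.sub_add_cancel ha, wpow_add, List.append_assoc] at h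
  simpa [wpow_length] using h.of_append_left

theorem exists_flatten_ofFn_of_isPrefix_drop {n : ℕ} (W : List α) (c : Fin n → ℕ)
    (y : Fin n → List α) (hy : ∀ j, y j <+: W.drop (c j))
    (hc : ∀ j k, j < k → c j + (y j).length ≤ c k) :
    ∃ (W₀ : List α) (f : Fin n → List α), W = W₀ ++ (List.ofFn f).flatten ∧ ∀ j, y j <+: f j := by
  induction n generalizing W with
  | zero => exact ⟨W, Fin.elim0, by simp, fun j => j.elim0⟩
  | succ n ih =>
    set m := c (Fin.last n)
    have hy' : ∀ j : Fin n, y j.castSucc <+: (W.take m).drop (c j.castSucc) := fun j => by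
      have := hc _ _ (Fin.castSucc_lt_last j)
      rw [List.drop_take, List.prefix_take_iff]
      exact ⟨hy _, by omega⟩
    obtain ⟨W₀, f, hW, hf⟩ := ih (W.take m) _ _ hy' fun j k hjk => hc _ _ (by simpa using hjk)
    refine ⟨W₀, Fin.snoc f (W.drop m), ?_, Fin.lastCases ?_ fun j => ?_⟩
    · simp only [List.ofFn_succ', Fin.snoc_castSucc, Fin.snoc_last, List.concat_eq_append,
        List.flatten_append, List.flatten_singleton, ← List.append_assoc, ← hW,
        List.take_append_drop]
    · simpa using hy (Fin.last n)
    · simpa using hf j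

theorem nDivisible_of_isPrefix_drop [LinearOrder α] {n : ℕ} (W : List α) (c : Fin n → ℕ)
    (y : Fin n → List α) (hy : ∀ j, y j <+: W.drop (c j))
    (hc : ∀ j k, j < k → c j + (y j).length ≤ c k) (hne : ∀ j, y j ≠ [])
    (hgt : ∀ j k, j < k → WordGt (y j) (y k)) : NDivisible W n := by
  obtain ⟨W₀, f, hW, hf⟩ := exists_flatten_ofFn_of_isPrefix_drop W c y hy hc
  exact ⟨W₀, f, hW, fun j h => hne j (List.prefix_nil.mp (h ▸ hf j)),
    fun j k hjk => (hgt j k hjk).of_isPrefix (hf j) (hf k)⟩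

theorem nDivisible_of_periodic_occurrences [LinearOrder α] {n : ℕ} (W x : List α)
    (q a : Fin n → ℕ) (u : Fin n → List α) (π : Fin n → ℕ) (haq : ∀ j, a j ≤ q j)
    (hu : ∀ j, u j ≠ []) (hocc : ∀ j, OccursAt W (wpow x (q j) ++ u j) (π j))
    (hsep : ∀ j k, j < k → π j + (wpow x (q j) ++ u j).length ≤ π k)
    (hgt : ∀ j k, j < k → WordGt (wpow x (a j) ++ u j) (wpow x (a k) ++ u k)) :
    NDivisible W n := by
  refine nDivisible_of_isPrefix_drop W (fun j => π j + (q j - a j) * x.length) _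
    (fun j => ((hocc j).wpow_append_of_le (haq j)).isPrefix_drop) (fun j k hjk => ?_)
    (fun j => List.append_ne_nil_of_right_ne_nil _ (hu j)) hgt
  have hlen : (q j - a j) * x.length + a j * x.length = q j * x.length := by
    rw [← Nat.add_mul, Nat.sub_add_cancel (haq j)]
  have := hsep j k hjk
  simp only [List.length_append, wpow_length] at this ⊢
  omega

theorem exists_strictMono_comp_of_injOn {ι β : Type*} [LinearOrder β] (T : Finset ι)
    (f : ι → β) (hf : Set.InjOn f T) {n : ℕ} (hn : T.card = n) :
    ∃ e : Fin n → ι, (∀ j, e j ∈ T) ∧ StrictMono (f ∘ e) := by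
  have hcard : (T.image f).card = n := by rw [Finset.card_image_of_injOn hf, hn]
  choose e he hfe using fun j => Finset.mem_image.mp (Finset.orderEmbOfFin_mem _ hcard j)
  refine ⟨e, he, fun j k hjk => ?_⟩
  simpa only [Function.comp, hfe] using ((T.image f).orderEmbOfFin hcard).strictMono hjk

theorem exists_card_eq_forall_or_forall_not {ι : Type*} [Fintype ι] (P : ι → Prop) {n : ℕ}
    (h : 2 * n - 1 ≤ Fintype.card ι) :
    ∃ T : Finset ι, T.card = n ∧ ((∀ i ∈ T, P i) ∨ ∀ i ∈ T, ¬ P i) := by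
  classical
  have hsum := Finset.card_filter_add_card_filter_not (s := Finset.univ) P
  rw [Finset.card_univ] at hsum
  by_cases hP : n ≤ (Finset.univ.filter P).card
  · obtain ⟨T, hT, hcard⟩ := Finset.exists_subset_card_eq hP
    exact ⟨T, hcard, .inl fun i hi => (Finset.mem_filter.mp (hT hi)).2⟩
  · obtain ⟨T, hT, hcard⟩ :=
      Finset.exists_subset_card_eq (s := Finset.univ.filter (¬ P ·)) (n := n) (by omega)
    exact ⟨T, hcard, .inr fun i hi => (Finset.mem_filter.mp (hT hi)).2⟩

end

theorem n_divisible_of_many_periodic_subwords_general {α : Type*} [LinearOrder α]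
    (n : ℕ) (x : List α)
    (W : List α)
    (p : Fin (2 * n - 1) → ℕ) (v : Fin (2 * n - 1) → List α)
    (pos : Fin (2 * n - 1) → ℕ)
    (hp : ∀ i, n < p i)
    (hv : ∀ i, (v i).length = x.length ∧ v i ≠ x)
    (hocc : ∀ i, OccursAt W (wpow x (p i) ++ v i) (pos i))
    (hdisj : ∀ i j, i ≠ j →
      pos i + (wpow x (p i) ++ v i).length ≤ pos j ∨
      pos j + (wpow x (p j) ++ v j).length ≤ pos i) :
    NDivisible W n := by
  have hv_ne : ∀ i, v i ≠ [] := fun i hi =>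
    (hv i).2 (by rw [hi, eq_comm, ← List.length_eq_zero_iff, ← (hv i).1, hi, List.length_nil])
  have hpos : Function.Injective pos := fun i j hij => by
    by_contra hne
    have := List.length_pos_iff.mpr (hv_ne i)
    have := List.length_pos_iff.mpr (hv_ne j)
    rcases hdisj i j hne with h | h <;> simp only [List.length_append] at h <;> omega
  obtain ⟨T, hT, hclass⟩ := exists_card_eq_forall_or_forall_not (fun i => v i < x) (n := n)
    (Fintype.card_fin _).ge
  obtain ⟨e, heT, he⟩ := exists_strictMono_comp_of_injOn T pos hpos.injOn hT
  have hsep : ∀ j k, j < k → pos (e j) + (wpow x (p (e j)) ++ v (e j)).length ≤ pos (e k) :=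
    fun j k hjk => (hdisj _ _ fun h => (he hjk).ne (by simp [h])).resolve_right fun h => by
      have := he hjk
      simp only [Function.comp] at this
      omega
  rcases hclass with hlt | hgt
  · refine nDivisible_of_periodic_occurrences W x (p ∘ e) (fun j => n - j) (v ∘ e) (pos ∘ e)
      (fun j => (Nat.sub_le _ _).trans (hp _).le) (fun j => hv_ne _) (fun j => hocc _) hsep
      fun j k hjk => wordGt_wpow_append_of_lt_of_gt (hlt _ (heT k)) (hv _).1 ?_
    have := k.isLt
    simp only [Fin.lt_def] at hjk
    omega
  · refine nDivisible_of_periodic_occurrences W x (p ∘ e) (fun j => j + 1) (v ∘ e) (pos ∘ e)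
      (fun j => j.isLt.trans (hp _)) (fun j => hv_ne _) (fun j => hocc _) hsep
      fun j k hjk => wordGt_wpow_append_of_gt_of_lt ?_ (hv _).1.symm (Nat.succ_lt_succ hjk)
    exact lt_of_le_of_ne (not_lt.mp (hgt _ (heT j))) (hv _).2.symm

/-- If a word `W` over a finite linearly ordered alphabet contains `2n−1`
pairwise disjoint occurrences of subwords `x^{pᵢ}·vᵢ`, where `x` is a fixed
nonempty word, each `pᵢ > n` and each `vᵢ` has the same length as `x` with
`vᵢ ≠ x`, then `W` is `n`-divisible. -/
theorem n_divisible_of_many_periodic_subwords {α : Type*} [LinearOrder α]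
    [Fintype α] (n : ℕ) (hn : 1 ≤ n) (x : List α) (hx : x ≠ [])
    (W : List α)
    (p : Fin (2 * n - 1) → ℕ) (v : Fin (2 * n - 1) → List α)
    (pos : Fin (2 * n - 1) → ℕ)
    (hp : ∀ i, n < p i)
    (hv : ∀ i, (v i).length = x.length ∧ v i ≠ x)
    (hocc : ∀ i, OccursAt W (wpow x (p i) ++ v i) (pos i))
    (hdisj : ∀ i j, i ≠ j →
      pos i + (wpow x (p i) ++ v i).length ≤ pos j ∨
      pos j + (wpow x (p j) ++ v j).length ≤ pos i) :
    NDivisible W n :=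
  n_divisible_of_many_periodic_subwords_general n x W p v pos hp hv hocc hdisj
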